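/- Let n ≥ 3 and W the n × n Wielandt matrix, and define S_k = { u : (W^k) u (n-1) > 0 }. Then the sets S_1, S_2, ..., S_{n^2-3n+2} are pairwise distinct proper subsets of {1,...,n}. -/

import Mathlib

/-- The `n × n` Wielandt matrix: `W i j = 1` iff (`i ≥ 2` and `j = i - 1`) or
(`i = 1` and `j ∈ {n-1, n}`), written here with 0-based indexing via `Fin n`. -/
def wielandt (n : ℕ) : Matrix (Fin n) (Fin n) ℕ := fun i j =>
  if (1 ≤ i.val ∧ j.val + 1 = i.val) ∨ (i.val = 0 ∧ (j.val = n - 2 ∨ j.val = n - 1))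
  then 1 else 0

/-!
The support `S k` of column `n - 2` of `W ^ k` determines `S (k + 1)`: it is the set of rows with a
nonzero entry in a column of `S k`. So a repetition `S p = S q` makes the sequence periodic from `p`
on, and a full `S k` stays full. In the digraph of `W` every walk into `n - 2`, continued by the
forced descent `n - 2 → ⋯ → 0`, is the descent from its start `u` to `0` followed by cycles of
lengths `n - 1` and `n`; hence `u ∈ S k` iff `k + (n - 2) - u` lies in the numerical semigroup
`⟨n - 1, n⟩`, whose Frobenius number is `n ^ 2 - 3 * n + 1`. Therefore `S k` is full for every
`k > n ^ 2 - 3 * n + 2`, whereas `n - 1 ∉ S (n ^ 2 - 3 * n + 2)`, and either a repetition or a full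
`S k` with `k ≤ n ^ 2 - 3 * n + 2` would make `S (n ^ 2 - 3 * n + 2)` full.
-/

namespace Matrix

variable {ι R : Type*} [Fintype ι] [Semiring R] [PartialOrder R] [CanonicallyOrderedAdd R]
  [NoZeroDivisors R]

theorem mul_apply_ne_zero_iff (A B : Matrix ι ι R) (u v : ι) :
    (A * B) u v ≠ 0 ↔ ∃ j, A u j ≠ 0 ∧ B j v ≠ 0 := by
  simp [mul_apply, Finset.sum_eq_zero_iff]

variable [DecidableEq ι]

def powColSupport (A : Matrix ι ι R) (v : ι) (k : ℕ) : Set ι := {u | (A ^ k) u v ≠ 0}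

variable {A : Matrix ι ι R} {v : ι}

theorem powColSupport_succ (k : ℕ) :
    A.powColSupport v (k + 1) = {u | ∃ j ∈ A.powColSupport v k, A u j ≠ 0} := by
  ext u
  simp only [powColSupport, pow_succ', Set.mem_ofPred_eq, mul_apply_ne_zero_iff]
  exact exists_congr fun j => and_comm

theorem powColSupport_add_eq_of_eq {p q : ℕ} (h : A.powColSupport v p = A.powColSupport v q)
    (m : ℕ) : A.powColSupport v (p + m) = A.powColSupport v (q + m) := by
  induction m with
  | zero => exact h
  | succ m ih => rw [← add_assoc, ← add_assoc, powColSupport_succ, powColSupport_succ, ih]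

theorem powColSupport_eq_univ_of_le (hrow : ∀ u, ∃ j, A u j ≠ 0) {k m : ℕ}
    (h : A.powColSupport v k = Set.univ) (hkm : k ≤ m) : A.powColSupport v m = Set.univ := by
  induction m, hkm using Nat.le_induction with
  | base => exact h
  | succ m _ ih =>
    rw [powColSupport_succ, ih]
    exact Set.eq_univ_of_forall fun u => (hrow u).imp fun j hj => ⟨Set.mem_univ j, hj⟩

theorem powColSupport_eq_univ_of_eq {p q M m : ℕ} (hpq : p < q)
    (h : A.powColSupport v p = A.powColSupport v q)
    (hM : ∀ k, M ≤ k → A.powColSupport v k = Set.univ) (hpm : p ≤ m) :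
    A.powColSupport v m = Set.univ := by
  obtain ⟨r, rfl⟩ := Nat.exists_eq_add_of_le hpm
  have hper : ∀ j, A.powColSupport v (p + r + j * (q - p)) = A.powColSupport v (p + r) := by
    intro j
    induction j with
    | zero => simp
    | succ j ih =>
      rw [← ih, show p + r + (j + 1) * (q - p) = q + (r + j * (q - p)) by rw [add_mul]; omega,
        add_assoc]
      exact (powColSupport_add_eq_of_eq h _).symm
  rw [← hper M]
  exact hM _ (le_add_left (Nat.le_mul_of_pos_right M (by omega)))

end Matrix

open Matrix

theorem wielandt_ne_zero_iff {n : ℕ} (u j : Fin n) :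
    wielandt n u j ≠ 0 ↔
      (1 ≤ u.val ∧ j.val + 1 = u.val) ∨ (u.val = 0 ∧ (j.val = n - 2 ∨ j.val = n - 1)) := by
  unfold wielandt
  split_ifs <;> simp_all

theorem wielandt_exists_ne_zero {n : ℕ} (u : Fin n) : ∃ j, wielandt n u j ≠ 0 := by
  rcases Nat.eq_zero_or_pos u.val with hu | hu
  · exact ⟨⟨n - 1, by omega⟩, (wielandt_ne_zero_iff _ _).2 (Or.inr ⟨hu, Or.inr rfl⟩)⟩
  · exact ⟨⟨u.val - 1, by omega⟩, (wielandt_ne_zero_iff _ _).2 (Or.inl ⟨hu, Nat.sub_add_cancel hu⟩)⟩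

theorem mem_powColSupport_wielandt_iff {n : ℕ} (hn : 2 ≤ n) {v : Fin n} (hv : v.val = n - 2)
    (k : ℕ) (u : Fin n) :
    u ∈ (wielandt n).powColSupport v k ↔ ∃ a b : ℕ, k + (n - 2) = u + a * (n - 1) + b * n := by
  obtain ⟨m, rfl⟩ := Nat.exists_eq_add_of_le' hn
  simp only [Nat.add_sub_cancel, show m + 2 - 1 = m + 1 by omega] at hv ⊢
  induction k generalizing u with
  | zero =>
    have hmem : u ∈ (wielandt (m + 2)).powColSupport v 0 ↔ u.val = m := by
      simp [powColSupport, one_apply, Fin.ext_iff, hv]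
    rw [hmem, zero_add]
    constructor
    · intro h
      exact ⟨0, 0, by simp [h]⟩
    · rintro ⟨a, b, h⟩
      have := u.isLt
      rcases a with _ | a <;> rcases b with _ | b
      · simpa using h.symm
      all_goals exfalso; nlinarith
  | succ k ih =>
    simp only [powColSupport_succ, Set.mem_ofPred_eq, ih, wielandt_ne_zero_iff,
      Nat.add_sub_cancel, show m + 2 - 1 = m + 1 by omega]
    rcases Nat.eq_zero_or_pos u.val with hu | hu
    · constructor
      · rintro ⟨j, ⟨a, b, h⟩, ⟨hu', -⟩ | ⟨-, hj | hj⟩⟩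
        · omega
        · exact ⟨a + 1, b, by rw [hu]; linarith⟩
        · exact ⟨a, b + 1, by rw [hu]; linarith⟩
      · rintro ⟨_ | a, b, h⟩
        · rcases b with _ | b
          · omega
          · exact ⟨⟨m + 1, by omega⟩, ⟨0, b, by simp only; linarith⟩, Or.inr ⟨hu, Or.inr rfl⟩⟩
        · exact ⟨⟨m, by omega⟩, ⟨a, b, by simp only; linarith⟩, Or.inr ⟨hu, Or.inl rfl⟩⟩
    · constructor
      · rintro ⟨j, ⟨a, b, h⟩, ⟨-, hj⟩ | ⟨hu0, -⟩⟩
        · exact ⟨a, b, by omega⟩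
        · omega
      · rintro ⟨a, b, h⟩
        exact ⟨⟨u - 1, by omega⟩, ⟨a, b, by simp only; omega⟩, Or.inl ⟨hu, by simp only; omega⟩⟩

theorem frobeniusNumber_pred_self {n : ℕ} (hn : 3 ≤ n) :
    FrobeniusNumber (n ^ 2 - 3 * n + 1) {n - 1, n} := by
  have hcop : Nat.Coprime (n - 1) n :=
    (Nat.coprime_self_sub_left (by omega)).2 (Nat.coprime_one_left n)
  convert frobeniusNumber_pair hcop (by omega) (by omega) using 1
  obtain ⟨m, rfl⟩ := Nat.exists_eq_add_of_le' hn
  simp only [show m + 3 - 1 = m + 2 by omega]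
  ring_nf
  omega

theorem powColSupport_wielandt_eq_univ {n : ℕ} (hn : 3 ≤ n) {v : Fin n} (hv : v.val = n - 2)
    {k : ℕ} (hk : n ^ 2 - 3 * n + 2 < k) : (wielandt n).powColSupport v k = Set.univ := by
  refine Set.eq_univ_of_forall fun u => ?_
  have hrep := (frobeniusNumber_iff.1 (frobeniusNumber_pred_self hn)).2 (k + (n - 2) - u)
    (by omega)
  obtain ⟨a, b, hab⟩ := (AddSubmonoid.mem_closure_pair _ _ _).1 hrep
  rw [mem_powColSupport_wielandt_iff (by omega) hv]
  exact ⟨a, b, by simp only [smul_eq_mul] at hab; omega⟩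

theorem notMem_powColSupport_wielandt {n : ℕ} (hn : 3 ≤ n) {v u : Fin n} (hv : v.val = n - 2)
    (hu : u.val = n - 1) : u ∉ (wielandt n).powColSupport v (n ^ 2 - 3 * n + 2) := by
  rw [mem_powColSupport_wielandt_iff (by omega) hv]
  rintro ⟨a, b, hab⟩
  refine (frobeniusNumber_iff.1 (frobeniusNumber_pred_self hn)).1
    ((AddSubmonoid.mem_closure_pair _ _ _).2 ⟨a, b, ?_⟩)
  simp only [smul_eq_mul]
  omega

/-- The sets `S_1, ..., S_{n^2-3n+2}` (column `n-1` supports of powers of the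
Wielandt matrix) are pairwise distinct proper subsets of the full index set. -/
theorem wielandt_S_sets_distinct_proper (n : ℕ) (hn : 3 ≤ n) :
    (∀ p q : ℕ, 1 ≤ p → p < q → q ≤ n ^ 2 - 3 * n + 2 →
      {u : Fin n | 0 < (wielandt n ^ p) u ⟨n - 2, by omega⟩} ≠
        {u : Fin n | 0 < (wielandt n ^ q) u ⟨n - 2, by omega⟩}) ∧
    (∀ k : ℕ, 1 ≤ k → k ≤ n ^ 2 - 3 * n + 2 →
      {u : Fin n | 0 < (wielandt n ^ k) u ⟨n - 2, by omega⟩} ≠ Set.univ) := by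
  set v : Fin n := ⟨n - 2, by omega⟩
  have hS (k : ℕ) : {u : Fin n | 0 < (wielandt n ^ k) u v} = (wielandt n).powColSupport v k := by
    simp only [powColSupport, Nat.pos_iff_ne_zero]
  have hlast : (⟨n - 1, by omega⟩ : Fin n) ∉ (wielandt n).powColSupport v (n ^ 2 - 3 * n + 2) :=
    notMem_powColSupport_wielandt hn rfl rfl
  refine ⟨fun p q _ hpq hq h => hlast ?_, fun k _ hk h => hlast ?_⟩
  · rw [hS, hS] at h
    rw [powColSupport_eq_univ_of_eq hpq h (fun _ => powColSupport_wielandt_eq_univ hn rfl)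
      (by omega)]
    trivial
  · rw [hS] at h
    rw [powColSupport_eq_univ_of_le wielandt_exists_ne_zero h hk]
    trivial
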